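/- arXiv:1912.04707 — 2 statements merged into one kernel-verified Lean document; each statement's English description precedes it below -/
import Mathlib

section
/- Let x_3 < x_2 < x_1 < 0 and set x_1' = x_1 - x_3, x_2' = x_2 - x_3. Then (x_1 - x_2)/(x_1 - x_3) > 4(x_1 - x_2)^2/(x_1 + x_2 + x_3)^2. -/
theorem stmt_2 (x₁ x₂ x₃ : ℝ) (h32 : x₃ < x₂) (h21 : x₂ < x₁) (h10 : x₁ < 0) :
    (x₁ - x₂) / (x₁ - x₃) > 4 * (x₁ - x₂) ^ 2 / (x₁ + x₂ + x₃) ^ 2 := by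
  have hs : x₁ + x₂ + x₃ < 0 := by linarith
  have h2 : (0:ℝ) < (x₁ + x₂ + x₃) ^ 2 := pow_pos (by linarith : (0:ℝ) < -(x₁+x₂+x₃)) 2 |>.trans_eq (by ring)
  have h1 : (0:ℝ) < x₁ - x₃ := by linarith
  rw [gt_iff_lt, div_lt_div_iff₀ h2 h1]
  nlinarith [sq_nonneg (x₂ - x₃), sq_nonneg x₁, mul_pos (sub_pos.2 h21) h1, sq_nonneg (x₁ - x₂), mul_pos (neg_pos.2 h10) (sub_pos.2 h21)]
end

section
/- Let x_3 < x_2 < x_1 < 0, y_1 = x_1 - x_3, y_2 = x_2 - x_3, and let p be the degree-2 real polynomial p(z) = -z^2 + (z/2)(y_1 + y_2 - x_3) + α with α defined via ∫_0^{y_2} p(s)/sqrt(R(s)) ds = 0, where sqrt(R(s)) = -sqrt(s(y_2-s)(y_1-s)) on (0, y_2). Then p has two simple real zeros z_- ∈ (0, y_2) and z_+ ∈ (y_1, ∞); moreover p(0) < 0, p(y_2) > 0, and p(y_1) > 0. -/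
/-!
With `w(s) = 1/√(s(y₂-s)(y₁-s))` and `c = (y₁ + y₂ - x₃)/2` we have `p z = -z² + c z + α`, and
the normalisation of `α` says `∫₀^{y₂} p w = 0`. Hence
`p z · ∫ w = ∫ (z - s)(c - z - s) w(s) ds` for every `z`, and only the sign of this integral matters.
For `z = 0` the integrand is negative since `c > y₂`. For `y₂ ≤ z ≤ y₁` put `d = c - z > y₂/2` and
write `w(s) = 1/√(s(y₂-s)) · 1/√(y₁-s)`, the first factor symmetric under `s ↦ y₂ - s`; then
`(z - s)/√(y₁ - s) = (z - s)/√((y₁ - z) + (z - s))` decreases in `s`, and pairing `s` with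
`y₂ - s` makes the integrand positive. The zero `z₋ ∈ (0, y₂)` comes from the intermediate value
theorem; the other zero is `c - z₋`, which exceeds `y₁` because `p y₁ > 0`, so the zeros are distinct.
-/

open MeasureTheory Set intervalIntegral

lemma intervalIntegrable_inv_sqrt_mul_sub {a : ℝ} (ha : 0 < a) :
    IntervalIntegrable (fun s => (√(s * (a - s)))⁻¹) volume 0 a := by
  have h := (Polynomial.Chebyshev.intervalIntegrable_sqrt_one_sub_sq_inv.comp_sub_right
    1).comp_mul_left (c := 2 / a)
  norm_num at h
  refine (h.const_mul (2 / a)).congr fun s _ => ?_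
  have hrw : 1 - (2 / a * s - 1) ^ 2 = (2 / a) ^ 2 * (s * (a - s)) := by field_simp; ring
  simp only [hrw, Real.sqrt_mul (sq_nonneg _), Real.sqrt_sq (by positivity : (0:ℝ) ≤ 2 / a)]
  field_simp

lemma monotoneOn_div_sqrt_add {r : ℝ} (hr : 0 ≤ r) :
    MonotoneOn (fun x => x / √(r + x)) (Ici 0) := by
  intro x hx y hy hxy
  rw [mem_Ici] at hx hy
  rcases hx.eq_or_lt with rfl | hx
  · simp only [zero_div]; exact div_nonneg hy (Real.sqrt_nonneg _)
  have hrx : 0 < r + x := by linarith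
  have hry : 0 < r + y := by linarith
  rw [div_le_div_iff₀ (Real.sqrt_pos.mpr hrx) (Real.sqrt_pos.mpr hry)]
  refine (pow_le_pow_iff_left₀ (by positivity) (by positivity) two_ne_zero).mp ?_
  rw [mul_pow, mul_pow, Real.sq_sqrt hry.le, Real.sq_sqrt hrx.le]
  nlinarith [mul_nonneg (sub_nonneg.mpr hxy) (by positivity : 0 ≤ r * (x + y) + x * y)]

lemma mul_integral_eq_integral_sub_mul {f w : ℝ → ℝ} {a b : ℝ}
    (hw : IntervalIntegrable w volume a b)
    (hfw : IntervalIntegrable (fun s => f s * w s) volume a b)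
    (horth : ∫ s in a..b, f s * w s = 0) (c : ℝ) :
    c * ∫ s in a..b, w s = ∫ s in a..b, (c - f s) * w s := by
  simp only [sub_mul]
  rw [integral_sub (hw.const_mul c) hfw, horth, sub_zero, intervalIntegral.integral_const_mul]

lemma integral_pos_of_add_comp_sub_pos {F : ℝ → ℝ} {a : ℝ} (ha : 0 < a)
    (hF : IntervalIntegrable F volume 0 a) (hpos : ∀ s ∈ Ioo 0 a, 0 < F s + F (a - s)) :
    0 < ∫ s in 0..a, F s := by
  have hF' : IntervalIntegrable (fun s => F (a - s)) volume 0 a := by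
    simpa using (hF.comp_sub_left a).symm
  have hreflect : ∫ s in 0..a, F (a - s) = ∫ s in 0..a, F s := by
    rw [integral_comp_sub_left]; simp
  have hsum := intervalIntegral_pos_of_pos_on (hF.add hF') hpos ha
  rw [integral_add hF hF', hreflect] at hsum
  linarith

lemma add_mul_comp_sub_pos {h : ℝ → ℝ} {a d s : ℝ} (hh : AntitoneOn h (Icc 0 a))
    (hpos : ∀ t ∈ Ioo 0 a, 0 < h t) (hd : a / 2 < d) (hs : s ∈ Ioo 0 a) :
    0 < (d - s) * h s + (d - (a - s)) * h (a - s) := by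
  obtain ⟨hs0, hsa⟩ := hs
  have hs' : a - s ∈ Ioo 0 a := ⟨by linarith, by linarith⟩
  rcases le_total s (a / 2) with hle | hle
  · have := hh ⟨hs0.le, hsa.le⟩ ⟨hs'.1.le, hs'.2.le⟩ (by linarith)
    nlinarith [hpos _ hs']
  · have := hh ⟨hs'.1.le, hs'.2.le⟩ ⟨hs0.le, hsa.le⟩ (by linarith)
    nlinarith [hpos _ ⟨hs0, hsa⟩]

noncomputable def ellipticWeight (y₁ y₂ s : ℝ) : ℝ := (√(s * (y₂ - s) * (y₁ - s)))⁻¹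

section ellipticWeight

variable {y₁ y₂ : ℝ}

lemma ellipticWeight_eq {s : ℝ} (hs : s ∈ Icc 0 y₂) :
    ellipticWeight y₁ y₂ s = (√(s * (y₂ - s)))⁻¹ * (√(y₁ - s))⁻¹ := by
  rw [ellipticWeight, Real.sqrt_mul (mul_nonneg hs.1 (sub_nonneg.mpr hs.2)), mul_inv]

lemma ellipticWeight_pos (h21 : y₂ ≤ y₁) {s : ℝ} (hs : s ∈ Ioo 0 y₂) :
    0 < ellipticWeight y₁ y₂ s := by
  obtain ⟨hs0, hs2⟩ := hs
  have : 0 < s * (y₂ - s) * (y₁ - s) :=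
    mul_pos (mul_pos hs0 (sub_pos.mpr hs2)) (sub_pos.mpr (hs2.trans_le h21))
  unfold ellipticWeight
  positivity

lemma intervalIntegrable_mul_ellipticWeight (h0 : 0 < y₂) (h21 : y₂ < y₁) {q : ℝ → ℝ}
    (hq : ContinuousOn q (Icc 0 y₂)) :
    IntervalIntegrable (fun s => q s * ellipticWeight y₁ y₂ s) volume 0 y₂ := by
  have hv : ContinuousOn (fun s => q s * (√(y₁ - s))⁻¹) (uIcc 0 y₂) := by
    rw [uIcc_of_le h0.le]
    refine hq.mul (ContinuousOn.inv₀ (by fun_prop) fun s hs => ?_)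
    exact (Real.sqrt_pos.mpr (by linarith [hs.2])).ne'
  refine ((intervalIntegrable_inv_sqrt_mul_sub h0).mul_continuousOn hv).congr_uIoo fun s hs => ?_
  rw [uIoo_of_le h0.le] at hs
  simp only [ellipticWeight_eq (Ioo_subset_Icc_self hs)]
  ring

lemma intervalIntegrable_ellipticWeight (h0 : 0 < y₂) (h21 : y₂ < y₁) :
    IntervalIntegrable (ellipticWeight y₁ y₂) volume 0 y₂ := by
  simpa using intervalIntegrable_mul_ellipticWeight h0 h21 continuousOn_const (q := 1)

lemma integral_ellipticWeight_pos (h0 : 0 < y₂) (h21 : y₂ < y₁) :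
    0 < ∫ s in 0..y₂, ellipticWeight y₁ y₂ s :=
  intervalIntegral_pos_of_pos_on (intervalIntegrable_ellipticWeight h0 h21)
    (fun _ hs => ellipticWeight_pos h21.le hs) h0

lemma integral_sub_mul_sub_mul_ellipticWeight_pos (h0 : 0 < y₂) (h21 : y₂ < y₁) {z d : ℝ}
    (hz₂ : y₂ ≤ z) (hz₁ : z ≤ y₁) (hd : y₂ / 2 < d) :
    0 < ∫ s in 0..y₂, (z - s) * (d - s) * ellipticWeight y₁ y₂ s := by
  set h : ℝ → ℝ := fun s => (z - s) / √(y₁ - s)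
  have hh : AntitoneOn h (Icc 0 y₂) := by
    intro s hs t ht hst
    have := monotoneOn_div_sqrt_add (sub_nonneg.mpr hz₁) (a := z - t) (b := z - s)
      (mem_Ici.mpr (by linarith [ht.2])) (mem_Ici.mpr (by linarith [hs.2])) (by linarith)
    simpa only [h, sub_add_sub_cancel] using this
  have hpos : ∀ t ∈ Ioo 0 y₂, 0 < h t := fun t ht =>
    div_pos (by linarith [ht.2]) (Real.sqrt_pos.mpr (by linarith [ht.2]))
  refine integral_pos_of_add_comp_sub_pos h0
    (intervalIntegrable_mul_ellipticWeight h0 h21 (by fun_prop)) fun s hs => ?_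
  have hs' : y₂ - s ∈ Icc 0 y₂ := ⟨by linarith [hs.2], by linarith [hs.1]⟩
  rw [ellipticWeight_eq (Ioo_subset_Icc_self hs), ellipticWeight_eq hs',
    show (y₂ - s) * (y₂ - (y₂ - s)) = s * (y₂ - s) by ring]
  have hu : 0 < (√(s * (y₂ - s)))⁻¹ := by
    have := mul_pos hs.1 (sub_pos.mpr hs.2); positivity
  have := mul_pos hu (add_mul_comp_sub_pos hh hpos hd hs)
  simp only [h, div_eq_mul_inv] at this
  linarith

theorem quadratic_signs_of_integral_mul_ellipticWeight_eq_zero {c α : ℝ} {p : ℝ → ℝ}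
    (h0 : 0 < y₂) (h21 : y₂ < y₁) (hc : y₁ + y₂ / 2 < c) (hp : ∀ z, p z = -z ^ 2 + c * z + α)
    (horth : ∫ s in 0..y₂, p s * ellipticWeight y₁ y₂ s = 0) :
    p 0 < 0 ∧ 0 < p y₂ ∧ 0 < p y₁ := by
  have hI := integral_ellipticWeight_pos h0 h21
  have hp_cont : Continuous p := funext hp ▸ by fun_prop
  have key (z : ℝ) : p z * ∫ s in 0..y₂, ellipticWeight y₁ y₂ s
      = ∫ s in 0..y₂, (z - s) * (c - z - s) * ellipticWeight y₁ y₂ s := by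
    rw [mul_integral_eq_integral_sub_mul (intervalIntegrable_ellipticWeight h0 h21)
      (intervalIntegrable_mul_ellipticWeight h0 h21 hp_cont.continuousOn) horth]
    congr 1 with s
    rw [hp, hp]
    ring
  refine ⟨?_, ?_, ?_⟩
  · have hpos₀ : 0 < ∫ s in 0..y₂, s * (c - s) * ellipticWeight y₁ y₂ s :=
      intervalIntegral_pos_of_pos_on (intervalIntegrable_mul_ellipticWeight h0 h21 (by fun_prop))
        (fun s hs => mul_pos (mul_pos hs.1 (by linarith [hs.2])) (ellipticWeight_pos h21.le hs))
        h0
    have := key 0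
    simp only [zero_sub, sub_zero, neg_mul, intervalIntegral.integral_neg] at this
    nlinarith
  · nlinarith [key y₂, integral_sub_mul_sub_mul_ellipticWeight_pos h0 h21 le_rfl h21.le
      (d := c - y₂) (by linarith)]
  · nlinarith [key y₁, integral_sub_mul_sub_mul_ellipticWeight_pos h0 h21 h21.le le_rfl
      (d := c - y₁) (by linarith)]

end ellipticWeight

theorem stmt_7 (x₁ x₂ x₃ : ℝ) (h32 : x₃ < x₂) (h21 : x₂ < x₁) (h10 : x₁ < 0)
    (y₁ y₂ α : ℝ) (p : ℝ → ℝ)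
    (hy1 : y₁ = x₁ - x₃) (hy2 : y₂ = x₂ - x₃)
    (hp : ∀ z, p z = -z ^ 2 + (z / 2) * (y₁ + y₂ - x₃) + α)
    (hα : ∫ s in (0:ℝ)..y₂, p s / (-(Real.sqrt (s * (y₂ - s) * (y₁ - s)))) = 0) :
    (∃ zm ∈ Set.Ioo 0 y₂, ∃ zp ∈ Set.Ioi y₁,
      p zm = 0 ∧ p zp = 0 ∧ deriv p zm ≠ 0 ∧ deriv p zp ≠ 0) ∧
    p 0 < 0 ∧ 0 < p y₂ ∧ 0 < p y₁ := by
  obtain ⟨c, hc⟩ : ∃ c, c = (y₁ + y₂ - x₃) / 2 := ⟨_, rfl⟩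
  have hp' (z : ℝ) : p z = -z ^ 2 + c * z + α := by rw [hp, hc]; ring
  have horth : ∫ s in 0..y₂, p s * ellipticWeight y₁ y₂ s = 0 := by
    simpa only [ellipticWeight, ← div_eq_mul_inv, div_neg, intervalIntegral.integral_neg,
      neg_eq_zero] using hα
  obtain ⟨hp0, hpy₂, hpy₁⟩ := quadratic_signs_of_integral_mul_ellipticWeight_eq_zero
    (by linarith) (by linarith) (by linarith) hp' horth
  obtain ⟨zm, hzm, hpzm⟩ := intermediate_value_Ioo (by linarith)
    (funext hp' ▸ by fun_prop : Continuous p).continuousOn ⟨hp0, hpy₂⟩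
  have hpzp : p (c - zm) = 0 := by linear_combination hp' (c - zm) - hp' zm + hpzm
  have hzp : y₁ < c - zm := by
    have : p y₁ = (y₁ - zm) * (c - zm - y₁) := by linear_combination hp' y₁ - hp' zm + hpzm
    nlinarith [hzm.2]
  have hderiv (z : ℝ) : deriv p z = c - 2 * z := by
    rw [funext hp']
    exact ((((hasDerivAt_pow 2 z).neg.add ((hasDerivAt_id z).const_mul c)).add_const α).deriv).trans
      (by simp only [Nat.cast_ofNat, Nat.add_one_sub_one, pow_one, mul_one]; ring)
  refine ⟨⟨zm, hzm, c - zm, hzp, hpzm, hpzp, ?_, ?_⟩, hp0, hpy₂, hpy₁⟩ <;>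
    rw [hderiv] <;> linarith [hzm.2]
end
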